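/- Fix a, b, C ∈ ℝ and let r(ξ) = (a + b|ξ|² + (3−b)|ξ|⁴ + (1−a)|ξ|⁶)/(1+|ξ|²)³ + C with F = (1/2)(1+|ξ|²)²·∂r/∂ξ̄. Then for every ξ = R·e^{iθ}, the surface point X(ξ) = Φ(ξ, F(ξ), r(ξ)) = (x¹ + i x², x³) is given by: x¹ + i x² = ([ (a−b+2C+2)(3+R⁴)R² − (a−b−2C)(1+3R⁴) ]·R·e^{iθ}) / (1+R²)⁴ and x³ = [ (a−C−1)R⁸ + (5a−b−2C−2)R⁶ + (6b−9)R⁴ + (5a−b+2C)R² + a + C ] / (1+R²)⁴. -/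

import Mathlib

open Complex MeasureTheory ComplexConjugate

noncomputable section

/-- Wirtinger derivative ∂/∂ξ of a complex-valued function. -/
def wd (f : ℂ → ℂ) (ξ : ℂ) : ℂ :=
  (1 / 2) * (fderiv ℝ f ξ 1 - Complex.I * fderiv ℝ f ξ Complex.I)

/-- Wirtinger derivative ∂/∂ξ̄ of a real-valued function, as a complex number. -/
def wdbarR (r : ℂ → ℝ) (ξ : ℂ) : ℂ :=
  (1 / 2) * ((fderiv ℝ r ξ 1 : ℝ) + Complex.I * (fderiv ℝ r ξ Complex.I : ℝ))

/-- F = (1/2)(1+|ξ|²)² ∂r/∂ξ̄. -/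
def Fcong (r : ℂ → ℝ) (ξ : ℂ) : ℂ :=
  (1 / 2) * ((1 + Complex.normSq ξ) ^ 2 : ℝ) * wdbarR r ξ

/-- ψ = (1+|ξ|²)² ∂/∂ξ [F/(1+|ξ|²)²] (real-valued). -/
def psiSlope (r : ℂ → ℝ) (ξ : ℂ) : ℝ :=
  (((1 + Complex.normSq ξ) ^ 2 : ℝ) *
    wd (fun z => Fcong r z / (((1 + Complex.normSq z) ^ 2 : ℝ) : ℂ)) ξ).re

/-- σ = −∂(conj F)/∂ξ. -/
def sigmaSlope (r : ℂ → ℝ) (ξ : ℂ) : ℂ :=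
  - wd (fun z => conj (Fcong r z)) ξ

/-- The round sphere area measure in the stereographic coordinate. -/
def muSphere : Measure ℂ :=
  volume.withDensity fun ξ => ENNReal.ofReal (4 / (1 + Complex.normSq ξ) ^ 2)

/-- Constant width w: r(ξ) + r(−1/conj ξ) = w for all ξ ≠ 0. -/
def ConstWidth (r : ℂ → ℝ) (w : ℝ) : Prop :=
  ∀ ξ : ℂ, ξ ≠ 0 → r ξ + r (-1 / conj ξ) = w

/-- The map `Φ : 𝕃 × ℝ → ℝ³ ≃ ℂ × ℝ` of the correspondence space. -/
def Phi (ξ η : ℂ) (r : ℝ) : ℂ × ℝ :=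
  ((2 * (η - conj η * ξ ^ 2) + 2 * ξ * ((1 + Complex.normSq ξ : ℝ) : ℂ) * (r : ℂ))
      / (((1 + Complex.normSq ξ) ^ 2 : ℝ) : ℂ),
   ((-2 * (η * conj ξ + conj η * ξ)
        + (((1 - Complex.normSq ξ * Complex.normSq ξ) * r : ℝ) : ℂ))).re
      / (1 + Complex.normSq ξ) ^ 2)

/-! The support function is radial, `r = g ∘ normSq`, so `∂r/∂ξ̄ = g'(|ξ|²) ξ` and `F` is a real
multiple `k ξ` of `ξ`. For such `η = k ξ` the map `Φ` collapses to a real multiple of `ξ` and a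
real height, both rational in `|ξ|²`; at `ξ = R e^{iθ}` the claim becomes two rational identities
in `R`. -/

theorem hasFDerivAt_normSq (ξ : ℂ) :
    HasFDerivAt (fun z : ℂ => Complex.normSq z) (2 • innerSL ℝ ξ) ξ := by
  simpa only [Complex.normSq_eq_norm_sq] using (hasStrictFDerivAt_norm_sq ξ).hasFDerivAt

theorem wdbarR_comp_normSq {g : ℝ → ℝ} {g' : ℝ} {ξ : ℂ}
    (hg : HasDerivAt g g' (Complex.normSq ξ)) :
    wdbarR (fun z => g (Complex.normSq z)) ξ = (g' : ℂ) * ξ := by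
  have hfd : fderiv ℝ (fun z => g (Complex.normSq z)) ξ = g' • 2 • innerSL ℝ ξ :=
    (hg.comp_hasFDerivAt ξ (hasFDerivAt_normSq ξ)).fderiv
  rw [wdbarR, hfd]
  apply Complex.ext <;> simp [Complex.inner] <;> ring

theorem Fcong_comp_normSq {g : ℝ → ℝ} {g' : ℝ} {ξ : ℂ}
    (hg : HasDerivAt g g' (Complex.normSq ξ)) :
    Fcong (fun z => g (Complex.normSq z)) ξ
      = ((1 / 2 * (1 + Complex.normSq ξ) ^ 2 * g' : ℝ) : ℂ) * ξ := by
  rw [Fcong, wdbarR_comp_normSq hg]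
  push_cast
  ring

theorem Phi_ofReal_mul_self (ξ : ℂ) (k ρ : ℝ) :
    Phi ξ ((k : ℂ) * ξ) ρ =
      ((((2 * k * (1 - Complex.normSq ξ) + 2 * (1 + Complex.normSq ξ) * ρ)
          / (1 + Complex.normSq ξ) ^ 2 : ℝ) : ℂ) * ξ,
        (-4 * k * Complex.normSq ξ + (1 - Complex.normSq ξ ^ 2) * ρ)
          / (1 + Complex.normSq ξ) ^ 2) := by
  have hmc : ξ * conj ξ = (Complex.normSq ξ : ℂ) := Complex.mul_conj ξ
  simp only [Phi, map_mul, Complex.conj_ofReal, Prod.mk.injEq]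
  constructor
  · push_cast
    rw [div_mul_eq_mul_div]
    congr 1
    linear_combination (-2 * (k : ℂ) * ξ) * hmc
  · have hheight : -2 * ((k : ℂ) * ξ * conj ξ + k * conj ξ * ξ)
          + (((1 - Complex.normSq ξ * Complex.normSq ξ) * ρ : ℝ) : ℂ)
        = ((-4 * k * Complex.normSq ξ + (1 - Complex.normSq ξ ^ 2) * ρ : ℝ) : ℂ) := by
      push_cast
      linear_combination (-4 * (k : ℂ)) * hmc
    rw [hheight, Complex.ofReal_re]

theorem normSq_ofReal_mul_exp_mul_I (R θ : ℝ) :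
    Complex.normSq ((R : ℂ) * Complex.exp (θ * Complex.I)) = R ^ 2 := by
  rw [Complex.normSq_mul, Complex.normSq_ofReal, Complex.normSq_eq_norm_sq,
    Complex.norm_exp_ofReal_mul_I]
  ring

def supportProfile (a b C s : ℝ) : ℝ :=
  (a + b * s + (3 - b) * s ^ 2 + (1 - a) * s ^ 3) / (1 + s) ^ 3 + C

theorem hasDerivAt_supportProfile (a b C : ℝ) {s : ℝ} (hs : 1 + s ≠ 0) :
    HasDerivAt (supportProfile a b C)
      (((b - 3 * a) * (1 + s ^ 2) + (6 - 4 * b) * s) / (1 + s) ^ 4) s := by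
  have hnum := ((((hasDerivAt_id' s).const_mul b).const_add a).fun_add
    ((hasDerivAt_pow 2 s).const_mul (3 - b))).fun_add ((hasDerivAt_pow 3 s).const_mul (1 - a))
  have hden := ((hasDerivAt_id' s).const_add 1).fun_pow 3
  refine ((hnum.fun_div hden (pow_ne_zero 3 hs)).add_const C).congr_deriv ?_
  field_simp
  ring

/-- the explicit parametrization of the constant width surface of
§4.2 reconstructed from its support function via `Φ`. -/
theorem example_surface_parametrization
    (a b C : ℝ) (r : ℂ → ℝ)
    (hr : ∀ ξ : ℂ, r ξ =
      (a + b * Complex.normSq ξ + (3 - b) * Complex.normSq ξ ^ 2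
        + (1 - a) * Complex.normSq ξ ^ 3) / (1 + Complex.normSq ξ) ^ 3 + C)
    (X : ℂ → ℂ × ℝ) (hX : ∀ ξ : ℂ, X ξ = Phi ξ (Fcong r ξ) (r ξ)) :
    ∀ R θ : ℝ,
      (X ((R : ℂ) * Complex.exp (θ * Complex.I))).1
          = ((((a - b + 2 * C + 2) * (3 + R ^ 4) * R ^ 2
                - (a - b - 2 * C) * (1 + 3 * R ^ 4)) * R : ℝ) : ℂ)
              * Complex.exp (θ * Complex.I) / (((1 + R ^ 2) ^ 4 : ℝ) : ℂ) ∧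
      (X ((R : ℂ) * Complex.exp (θ * Complex.I))).2
          = ((a - C - 1) * R ^ 8 + (5 * a - b - 2 * C - 2) * R ^ 6
              + (6 * b - 9) * R ^ 4 + (5 * a - b + 2 * C) * R ^ 2 + a + C)
              / (1 + R ^ 2) ^ 4 := by
  intro R θ
  have hs := normSq_ofReal_mul_exp_mul_I R θ
  have hderiv := hasDerivAt_supportProfile a b C
    (s := Complex.normSq ((R : ℂ) * Complex.exp (θ * Complex.I))) (by rw [hs]; positivity)
  have hr_radial : r = fun z => supportProfile a b C (Complex.normSq z) := funext hr
  rw [hX, hr_radial, Fcong_comp_normSq hderiv, Phi_ofReal_mul_self]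
  simp only [hs, supportProfile]
  constructor
  · rw [← mul_assoc, ← Complex.ofReal_mul, mul_div_right_comm, ← Complex.ofReal_div]
    congr 2
    field_simp
    ring
  · field_simp
    ring

end
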